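/- arXiv:2312.04685 — 8 statements merged into one kernel-verified Lean document; each statement's English description precedes it below -/
import Mathlib

section
/- In a pseudocomplemented poset (P,≤,*,0,1), if U(a*,b*) = {1} then L(a,b) = {0}. -/
/-- If U(a*,b*) = {1} then L(a,b) = {0}. -/
theorem stmt_5 {P : Type*} [PartialOrder P] [OrderBot P] (s : P → P)
    (hpc1 : ∀ x : P, lowerBounds {x, s x} = {⊥})
    (hpc2 : ∀ x y : P, lowerBounds {x, y} = {⊥} → y ≤ s x)
    (a b : P) (h : upperBounds {s a, s b} = {s ⊥}) :
    lowerBounds {a, b} = {⊥} := by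
  ext c
  simp only [lowerBounds, Set.mem_insert_iff, Set.mem_singleton_iff, Set.mem_setOf_eq]
  constructor
  · rintro hc
    have hca : c ≤ a := hc (Or.inl rfl)
    have hcb : c ≤ b := hc (Or.inr rfl)
    -- s a ≤ s c
    have key : ∀ x : P, c ≤ x → s x ≤ s c := by
      intro x hcx
      apply hpc2
      ext z
      simp only [lowerBounds, Set.mem_insert_iff, Set.mem_singleton_iff, Set.mem_setOf_eq]
      constructor
      · intro hz
        have h1 : z ≤ c := hz (Or.inl rfl)
        have h2 : z ≤ s x := hz (Or.inr rfl)
        have : z ∈ lowerBounds {x, s x} := by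
          intro w hw
          rcases hw with rfl | hw
          · exact h1.trans hcx
          · simp only [Set.mem_singleton_iff] at hw; subst hw; exact h2
        rw [hpc1 x] at this
        exact this
      · rintro rfl w hw
        exact bot_le
    have hac : s a ≤ s c := key a hca
    have hbc : s b ≤ s c := key b hcb
    have hsc : s c ∈ upperBounds {s a, s b} := by
      intro w hw
      rcases hw with rfl | hw
      · exact hac
      · simp only [Set.mem_singleton_iff] at hw; subst hw; exact hbc
    rw [h] at hsc
    -- c ≤ s ⊥ = s c
    have hcsb : c ≤ s ⊥ := by
      apply hpc2
      ext z
      simp only [lowerBounds, Set.mem_insert_iff, Set.mem_singleton_iff, Set.mem_setOf_eq]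
      constructor
      · intro hz
        exact le_bot_iff.mp (hz (Or.inl rfl))
      · rintro rfl w hw; exact bot_le
    have hcc : c ∈ lowerBounds {c, s c} := by
      intro w hw
      rcases hw with hw | hw
      · exact le_of_eq hw.symm
      · simp only [Set.mem_singleton_iff] at hw; subst hw
        rw [hsc]; exact hcsb
    rw [hpc1 c] at hcc
    exact hcc
  · rintro rfl w hw
    exact bot_le
end

section
/- In a pseudocomplemented poset satisfying the ACC, for all elements a,b one has Max L(a*,b*) =₁ (Max L(a*,b*))**, i.e., each set is ≤₁-below the other, where (Max L(a*,b*))** means the set {x** : x ∈ Max L(a*,b*)}. -/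
/-- The set of maximal elements of A. -/
def maxE {P : Type*} [PartialOrder P] (A : Set P) : Set P :=
  {x ∈ A | ∀ y ∈ A, x ≤ y → x = y}

/-- A ≤₁ B: every element of A lies below some element of B. -/
def le1 {P : Type*} [Preorder P] (A B : Set P) : Prop :=
  ∀ a ∈ A, ∃ b ∈ B, a ≤ b

/-- Under ACC: Max L(a*,b*) =₁ (Max L(a*,b*))**. -/
theorem stmt_10 {P : Type*} [PartialOrder P] [OrderBot P] (s : P → P)
    (hpc1 : ∀ x : P, lowerBounds {x, s x} = {⊥})
    (hpc2 : ∀ x y : P, lowerBounds {x, y} = {⊥} → y ≤ s x)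
    [WellFoundedGT P] (a b : P) :
    le1 (maxE (lowerBounds {s a, s b})) (s '' (s '' maxE (lowerBounds {s a, s b}))) ∧
    le1 (s '' (s '' maxE (lowerBounds {s a, s b}))) (maxE (lowerBounds {s a, s b})) := by
  -- x ≤ s (s x)
  have hle : ∀ x : P, x ≤ s (s x) := by
    intro x
    apply hpc2
    rw [Set.pair_comm]
    exact hpc1 x
  -- antitone
  have hanti : ∀ x y : P, x ≤ y → s y ≤ s x := by
    intro x y hxy
    apply hpc2
    apply Set.eq_singleton_iff_unique_mem.2
    constructor
    · intro z hz; simp at hz; rcases hz with h | h <;> simp [h]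
    · intro z hz
      have h1 : z ∈ lowerBounds {y, s y} := by
        intro w hw
        rcases hw with h | h
        · exact le_trans (hz (by simp)) (h ▸ hxy)
        · simp at h; exact h ▸ hz (by simp)
      have := hpc1 y ▸ h1
      simpa using this
  set L := lowerBounds {s a, s b} with hL
  have hssL : ∀ x ∈ L, s (s x) ∈ L := by
    intro x hx
    intro w hw
    rcases hw with h | h
    · subst h
      have h1 : x ≤ s a := hx (by simp)
      have h2 : s (s x) ≤ s (s (s a)) := hanti _ _ (hanti _ _ h1)
      exact h2.trans (hanti _ _ (hle a))
    · simp at h; subst h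
      have h1 : x ≤ s b := hx (by simp)
      have h2 : s (s x) ≤ s (s (s b)) := hanti _ _ (hanti _ _ h1)
      exact h2.trans (hanti _ _ (hle b))
  constructor
  · intro x hx
    exact ⟨s (s x), ⟨s x, ⟨x, hx, rfl⟩, rfl⟩, hle x⟩
  · rintro y ⟨_, ⟨x, hx, rfl⟩, rfl⟩
    -- s (s x) ∈ L, find maximal element above it
    have hmem : s (s x) ∈ L := hssL x hx.1
    have hwf : WellFounded ((· > ·) : P → P → Prop) := wellFounded_gt
    obtain ⟨m, ⟨hmL, hmge⟩, hmax⟩ :=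
      hwf.has_min {z ∈ L | s (s x) ≤ z} ⟨s (s x), hmem, le_refl _⟩
    refine ⟨m, ⟨hmL, ?_⟩, hmge⟩
    intro z hz hmz
    by_contra hne
    exact hmax z ⟨hz, hmge.trans hmz⟩ (lt_of_le_of_ne hmz hne)
end

section
/- In a pseudocomplemented poset satisfying the ACC, for all elements a,b: L(a, (Max L(a*,b))*) = L(a), where (Max L(a*,b))* = {x* : x ∈ Max L(a*,b)}. -/
/-- Under ACC: L(a, (Max L(a*,b))*) = L(a). -/
theorem stmt_11 {P : Type*} [PartialOrder P] [OrderBot P] (s : P → P)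
    (hpc1 : ∀ x : P, lowerBounds {x, s x} = {⊥})
    (hpc2 : ∀ x y : P, lowerBounds {x, y} = {⊥} → y ≤ s x)
    [WellFoundedGT P] (a b : P) :
    lowerBounds (insert a (s '' maxE (lowerBounds {s a, b}))) = lowerBounds {a} := by
  apply le_antisymm
  · exact lowerBounds_mono_set (by intro x hx; rcases hx with rfl; exact Set.mem_insert _ _)
  · intro x hx
    have hxa : x ≤ a := hx (Set.mem_singleton a)
    intro y hy
    rcases hy with rfl | ⟨m, hm, rfl⟩
    · exact hxa
    · have hmsa : m ≤ s a := hm.1 (Set.mem_insert _ _)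
      have hLB : lowerBounds {m, a} = {⊥} := by
        apply le_antisymm
        · intro z hz
          have hz1 : z ≤ m := hz (Set.mem_insert _ _)
          have hz2 : z ≤ a := hz (Set.mem_insert_of_mem _ rfl)
          have : z ∈ lowerBounds {a, s a} := by
            intro w hw
            rcases hw with rfl | hw
            · exact hz2
            · exact le_trans hz1 (hw ▸ hmsa)
          rw [hpc1 a] at this
          exact this
        · intro z hz
          rcases hz with rfl
          intro w _
          exact bot_le
      exact le_trans hxa (hpc2 m a hLB)
end

section
/- In a pseudocomplemented poset satisfying the ACC, for all elements a,b: Max L(a,b) ≤₁ Max L(a**,b) ≤₁ Max L(a**,b**). -/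
lemma exists_le_maxE {P : Type*} [PartialOrder P] [WellFoundedGT P]
    {B : Set P} {x : P} (hx : x ∈ B) : ∃ m ∈ maxE B, x ≤ m := by
  obtain ⟨m, hm, hmin⟩ := (wellFounded_gt (α := P)).has_min {y ∈ B | x ≤ y} ⟨x, hx, le_rfl⟩
  refine ⟨m, ⟨hm.1, fun y hy hle => ?_⟩, hm.2⟩
  by_contra hne
  exact hmin y ⟨hy, hm.2.trans hle⟩ (lt_of_le_of_ne hle hne)

lemma le1_of_subset {P : Type*} [PartialOrder P] [WellFoundedGT P]
    {A B : Set P} (h : A ⊆ B) : le1 (maxE A) (maxE B) :=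
  fun x hx => exists_le_maxE (h hx.1)

/-- Under ACC: Max L(a,b) ≤₁ Max L(a**,b) ≤₁ Max L(a**,b**). -/
theorem stmt_12 {P : Type*} [PartialOrder P] [OrderBot P] (s : P → P)
    (hpc1 : ∀ x : P, lowerBounds {x, s x} = {⊥})
    (hpc2 : ∀ x y : P, lowerBounds {x, y} = {⊥} → y ≤ s x)
    [WellFoundedGT P] (a b : P) :
    le1 (maxE (lowerBounds {a, b})) (maxE (lowerBounds {s (s a), b})) ∧
    le1 (maxE (lowerBounds {s (s a), b})) (maxE (lowerBounds {s (s a), s (s b)})) := by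
  have hss : ∀ x : P, x ≤ s (s x) := fun x => by
    apply hpc2
    rw [Set.pair_comm]
    exact hpc1 x
  constructor
  · apply le1_of_subset
    intro c hc
    intro y hy
    rcases hy with rfl | hy
    · exact (hc (Set.mem_insert a _)).trans (hss a)
    · exact hc (by simp [hy])
  · apply le1_of_subset
    intro c hc
    intro y hy
    rcases hy with rfl | hy
    · exact hc (Set.mem_insert _ _)
    · simp only [Set.mem_singleton_iff] at hy
      subst hy
      exact (hc (by simp)).trans (hss b)
end

section
/- In a pseudocomplemented poset satisfying the ACC, for all elements a,b: (Max L(a,b))** ≤₁ Max L(a**,b**), where (Max L(a,b))** = {x** : x ∈ Max L(a,b)}. -/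
lemma aux_le_ss {P : Type*} [PartialOrder P] [OrderBot P] (s : P → P)
    (hpc1 : ∀ x : P, lowerBounds {x, s x} = {⊥})
    (hpc2 : ∀ x y : P, lowerBounds {x, y} = {⊥} → y ≤ s x) (x : P) :
    x ≤ s (s x) := by
  apply hpc2
  rw [Set.pair_comm]
  exact hpc1 x

lemma aux_anti {P : Type*} [PartialOrder P] [OrderBot P] (s : P → P)
    (hpc1 : ∀ x : P, lowerBounds {x, s x} = {⊥})
    (hpc2 : ∀ x y : P, lowerBounds {x, y} = {⊥} → y ≤ s x) {x y : P} (h : x ≤ y) :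
    s y ≤ s x := by
  apply hpc2
  apply Set.eq_singleton_iff_unique_mem.2
  constructor
  · intro z hz; simp only [Set.mem_insert_iff, Set.mem_singleton_iff] at hz
    rcases hz with rfl | rfl <;> exact bot_le
  · intro z hz
    have h1 : z ≤ x := hz (by simp)
    have h2 : z ≤ s y := hz (by simp)
    have : z ∈ lowerBounds {y, s y} := by
      intro w hw; simp only [Set.mem_insert_iff, Set.mem_singleton_iff] at hw
      rcases hw with rfl | rfl
      · exact h1.trans h
      · exact h2
    rw [hpc1 y] at this
    exact this

lemma aux_max {P : Type*} [PartialOrder P] [WellFoundedGT P] (S : Set P) {x : P}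
    (hx : x ∈ S) : ∃ m ∈ maxE S, x ≤ m := by
  obtain ⟨m, ⟨hmS, hxm⟩, hmin⟩ :=
    (wellFounded_gt (α := P)).has_min {y ∈ S | x ≤ y} ⟨x, hx, le_rfl⟩
  refine ⟨m, ⟨hmS, fun y hy hmy => ?_⟩, hxm⟩
  by_contra hne
  exact hmin y ⟨hy, hxm.trans hmy⟩ (lt_of_le_of_ne hmy hne)

/-- Under ACC: (Max L(a,b))** ≤₁ Max L(a**,b**). -/
theorem stmt_13 {P : Type*} [PartialOrder P] [OrderBot P] (s : P → P)
    (hpc1 : ∀ x : P, lowerBounds {x, s x} = {⊥})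
    (hpc2 : ∀ x y : P, lowerBounds {x, y} = {⊥} → y ≤ s x)
    [WellFoundedGT P] (a b : P) :
    le1 (s '' (s '' maxE (lowerBounds {a, b}))) (maxE (lowerBounds {s (s a), s (s b)})) := by
  rintro _ ⟨_, ⟨x, hx, rfl⟩, rfl⟩
  have hxa : x ≤ a := hx.1 (by simp)
  have hxb : x ≤ b := hx.1 (by simp)
  have hmem : s (s x) ∈ lowerBounds {s (s a), s (s b)} := by
    intro w hw; simp only [Set.mem_insert_iff, Set.mem_singleton_iff] at hw
    rcases hw with rfl | rfl
    · exact aux_anti s hpc1 hpc2 (aux_anti s hpc1 hpc2 hxa)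
    · exact aux_anti s hpc1 hpc2 (aux_anti s hpc1 hpc2 hxb)
  exact aux_max _ hmem
end

section
/- In a pseudocomplemented poset satisfying the DCC, for all elements a,b: Min U(a**,b**) ≤₂ (Min U(a,b))**, where A ≤₂ B means every element of B is above some element of A. -/
/-- The set of minimal elements of A. -/
def minE {P : Type*} [PartialOrder P] (A : Set P) : Set P :=
  {x ∈ A | ∀ y ∈ A, y ≤ x → x = y}

/-- A ≤₂ B: every element of B lies above some element of A. -/
def le2 {P : Type*} [Preorder P] (A B : Set P) : Prop :=
  ∀ b ∈ B, ∃ a ∈ A, a ≤ b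

lemma s_anti {P : Type*} [PartialOrder P] [OrderBot P] (s : P → P)
    (hpc1 : ∀ x : P, lowerBounds {x, s x} = {⊥})
    (hpc2 : ∀ x y : P, lowerBounds {x, y} = {⊥} → y ≤ s x)
    {x y : P} (hxy : x ≤ y) : s y ≤ s x := by
  apply hpc2
  ext z
  constructor
  · intro hz
    have hzx : z ≤ x := hz (by simp)
    have hzsy : z ≤ s y := hz (by simp)
    have : z ∈ lowerBounds {y, s y} := by
      intro w hw
      rcases hw with h | h
      · exact h ▸ hzx.trans hxy
      · exact h ▸ hzsy
    rw [hpc1 y] at this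
    exact this
  · intro hz
    rw [Set.mem_singleton_iff] at hz
    subst hz
    intro w _
    exact bot_le

/-- Under DCC: Min U(a**,b**) ≤₂ (Min U(a,b))**. -/
theorem stmt_14 {P : Type*} [PartialOrder P] [OrderBot P] (s : P → P)
    (hpc1 : ∀ x : P, lowerBounds {x, s x} = {⊥})
    (hpc2 : ∀ x y : P, lowerBounds {x, y} = {⊥} → y ≤ s x)
    [WellFoundedLT P] (a b : P) :
    le2 (minE (upperBounds {s (s a), s (s b)})) (s '' (s '' minE (upperBounds {a, b}))) := by
  rintro _ ⟨_, ⟨c, ⟨hcU, _⟩, rfl⟩, rfl⟩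
  have hac : a ≤ c := hcU (by simp)
  have hbc : b ≤ c := hcU (by simp)
  have ha2 : s (s a) ≤ s (s c) := s_anti s hpc1 hpc2 (s_anti s hpc1 hpc2 hac)
  have hb2 : s (s b) ≤ s (s c) := s_anti s hpc1 hpc2 (s_anti s hpc1 hpc2 hbc)
  have hmem : s (s c) ∈ {x ∈ upperBounds {s (s a), s (s b)} | x ≤ s (s c)} := by
    refine ⟨?_, le_refl _⟩
    intro w hw
    rcases hw with h | h
    · exact h ▸ ha2
    · exact h ▸ hb2
  obtain ⟨m, ⟨hmU, hmle⟩, hmin⟩ :=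
    (IsWellFounded.wf (r := ((· < ·) : P → P → Prop))).has_min _ ⟨_, hmem⟩
  refine ⟨m, ⟨hmU, ?_⟩, hmle⟩
  intro y hyU hym
  by_contra hne
  exact hmin y ⟨hyU, hym.trans hmle⟩ (lt_of_le_of_ne hym (fun h => hne h.symm))
end

section
/- In a pseudocomplemented poset satisfying both the ACC and the DCC, for all elements a,b: Min U(a*,b*) ≤₂ (Max L(a,b))*, i.e., every element of (Max L(a,b))* is above some element of Min U(a*,b*). -/
/-- Under ACC and DCC: Min U(a*,b*) ≤₂ (Max L(a,b))*. -/
theorem stmt_16 {P : Type*} [PartialOrder P] [OrderBot P] (s : P → P)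
    (hpc1 : ∀ x : P, lowerBounds {x, s x} = {⊥})
    (hpc2 : ∀ x y : P, lowerBounds {x, y} = {⊥} → y ≤ s x)
    [WellFoundedGT P] [WellFoundedLT P] (a b : P) :
    le2 (minE (upperBounds {s a, s b})) (s '' maxE (lowerBounds {a, b})) := by
  rintro _ ⟨c, ⟨hcL, _⟩, rfl⟩
  have hca : c ≤ a := hcL (by simp)
  have hcb : c ≤ b := hcL (by simp)
  -- s is antitone above c
  have key : ∀ x : P, c ≤ x → s x ≤ s c := by
    intro x hx
    apply hpc2
    apply subset_antisymm
    · intro z hz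
      have hz1 : z ≤ c := hz (by simp)
      have hz2 : z ≤ s x := hz (by simp)
      have hmem : z ∈ lowerBounds ({x, s x} : Set P) := by
        rintro w (rfl | rfl)
        · exact hz1.trans hx
        · exact hz2
      rw [hpc1 x] at hmem
      exact hmem
    · rintro z rfl
      rintro w (rfl | rfl) <;> exact bot_le
  have hscU : s c ∈ upperBounds ({s a, s b} : Set P) := by
    rintro w (rfl | rfl)
    · exact key a hca
    · exact key b hcb
  -- by DCC, find a minimal upper bound below s c
  obtain ⟨m, ⟨hmU, hmle⟩, hmin⟩ :=
    (wellFounded_lt (α := P)).has_min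
      {x | x ∈ upperBounds ({s a, s b} : Set P) ∧ x ≤ s c} ⟨s c, hscU, le_refl _⟩
  refine ⟨m, ⟨hmU, ?_⟩, hmle⟩
  intro y hy hyle
  by_contra h
  exact hmin y ⟨hy, hyle.trans hmle⟩ (hyle.lt_of_ne (Ne.symm h))
end

section
/- Every Stone poset satisfies the Stone identity U(x*,x**) = {1} for all x. -/
/-- Every Stone poset satisfies the Stone identity U(x*,x**) = {1}. -/
theorem stmt_17 {P : Type*} [PartialOrder P] [OrderBot P] (s : P → P)
    (hpc1 : ∀ x : P, lowerBounds {x, s x} = {⊥})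
    (hpc2 : ∀ x y : P, lowerBounds {x, y} = {⊥} → y ≤ s x)
    [WellFoundedGT P] [WellFoundedLT P]
    (hStone : ∀ x y : P,
      le2 (s '' maxE (lowerBounds {s x, s y})) (minE (upperBounds {s (s x), s (s y)}))) :
    ∀ x : P, upperBounds {s x, s (s x)} = {s ⊥} := by
  -- s ⊥ is the top element
  have htop : ∀ y : P, y ≤ s ⊥ := by
    intro y
    apply hpc2
    apply Set.eq_singleton_iff_unique_mem.mpr
    constructor
    · intro w hw
      rcases hw with rfl | hw
      · exact le_refl _
      · exact bot_le
    · intro z hz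
      exact le_antisymm (hz (Set.mem_insert _ _)) bot_le
  -- s is antitone
  have hanti : ∀ a b : P, a ≤ b → s b ≤ s a := by
    intro a b hab
    apply hpc2
    apply Set.eq_singleton_iff_unique_mem.mpr
    constructor
    · intro w hw
      rcases hw with rfl | hw <;> exact bot_le
    · intro z hz
      have hmem : z ∈ lowerBounds ({b, s b} : Set P) := by
        intro w hw
        rcases hw with rfl | hw
        · exact le_trans (hz (Set.mem_insert _ _)) hab
        · rw [Set.mem_singleton_iff] at hw; subst hw
          exact hz (Set.mem_insert_of_mem _ rfl)
      rw [hpc1] at hmem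
      exact hmem
  -- x ≤ s (s x)
  have hdc : ∀ x : P, x ≤ s (s x) := by
    intro x
    exact hpc2 (s x) x (by rw [Set.pair_comm]; exact hpc1 x)
  -- s (s (s x)) = s x
  have h3 : ∀ x : P, s (s (s x)) = s x :=
    fun x => le_antisymm (hanti _ _ (hdc x)) (hdc (s x))
  intro x
  ext u
  simp only [Set.mem_singleton_iff]
  constructor
  · intro hu
    -- find a minimal element of the upper bound set below u
    have hS : (u : P) ∈ {v | v ∈ upperBounds ({s x, s (s x)} : Set P) ∧ v ≤ u} :=
      ⟨hu, le_refl u⟩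
    obtain ⟨m, ⟨hmU, hmu⟩, hmin⟩ :=
      (wellFounded_lt (α := P)).has_min _ ⟨u, hS⟩
    have hmE : m ∈ minE (upperBounds ({s x, s (s x)} : Set P)) := by
      refine ⟨hmU, fun w hw hwm => ?_⟩
      have hnot := hmin w ⟨hw, le_trans hwm hmu⟩
      exact ((lt_or_eq_of_le hwm).resolve_left hnot).symm
    have hst := hStone (s x) x
    have hlb : lowerBounds ({s (s x), s x} : Set P) = {⊥} := by
      rw [Set.pair_comm]; exact hpc1 (s x)
    rw [hlb] at hst
    have hmax : maxE ({⊥} : Set P) = {⊥} := by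
      ext z
      constructor
      · exact fun h => h.1
      · intro h
        refine ⟨h, fun y hy _ => ?_⟩
        rw [Set.mem_singleton_iff] at h hy
        rw [h, hy]
    rw [hmax, Set.image_singleton, h3 x] at hst
    obtain ⟨a, ha, hale⟩ := hst m hmE
    rw [Set.mem_singleton_iff] at ha
    subst ha
    exact le_antisymm (htop u) (le_trans hale hmu)
  · intro hu
    subst hu
    intro w _
    exact htop w
end
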